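/- arXiv:1706.08109 — 2 statements merged into one kernel-verified Lean document; each statement's English description precedes it below -/
import Mathlib

section
/- Let A be a finitely generated abelian group equipped with an action of ℤ/2, and suppose the coinvariants A_{ℤ/2} = A/⟨a - σ·a : a ∈ A⟩ form a finite group of odd order, where σ is the generator of ℤ/2. Then A is finite of odd order. -/
/-!
Write `φ a = a - σ a`, so that the coinvariants are `A ⧸ φ(A)`. Since the coinvariants have odd
order, doubling is onto there, i.e. `A = 2A + φ(A)`. As `σ` is an involution, `φ ∘ φ = 2φ`, so
`φ(A) = φ(2A + φ(A)) ⊆ 2A` and hence `A = 2A`. By Nakayama's lemma over `ℤ` some odd integer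
kills the finitely generated group `A`, which is therefore finite without elements of order 2.
-/

lemma two_nsmul_surjective_of_odd_card {G : Type*} [AddGroup G] (h : Odd (Nat.card G)) :
    Function.Surjective fun g : G => 2 • g :=
  (Nat.Coprime.nsmul_right_bijective h.coprime_two_right).2

lemma AddMonoidHom.two_nsmul_surjective_of_quotient_range {A : Type*} [AddCommGroup A]
    (φ : A →+ A) (hφ : ∀ a, φ (φ a) = 2 • φ a)
    (hq : Function.Surjective fun x : A ⧸ φ.range => 2 • x) :
    Function.Surjective fun a : A => 2 • a := by
  have decomp : ∀ a : A, ∃ b c, a = 2 • b + φ c := by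
    intro a
    obtain ⟨x, hx⟩ := hq (a : A ⧸ φ.range)
    obtain ⟨b, rfl⟩ := QuotientAddGroup.mk_surjective x
    have hmem : a - 2 • b ∈ φ.range := by
      rw [← QuotientAddGroup.eq_zero_iff, QuotientAddGroup.mk_sub, QuotientAddGroup.mk_nsmul]
      simp only [hx, sub_self]
    obtain ⟨c, hc⟩ := hmem
    exact ⟨b, c, by rw [hc, add_sub_cancel]⟩
  intro a
  obtain ⟨b, c, rfl⟩ := decomp a
  obtain ⟨d, e, rfl⟩ := decomp c
  refine ⟨b + φ d + φ e, ?_⟩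
  simp only [map_add, map_nsmul, hφ, nsmul_add, add_assoc]

lemma AddGroup.FG.exists_odd_zsmul_eq_zero_of_two_nsmul_surjective {A : Type*}
    [AddCommGroup A] (hfg : AddGroup.FG A) (h2 : Function.Surjective fun a : A => 2 • a) :
    ∃ r : ℤ, Odd r ∧ ∀ a : A, r • a = 0 := by
  have hle : (⊤ : Submodule ℤ A) ≤ Ideal.span {(2 : ℤ)} • ⊤ := by
    intro a _
    obtain ⟨b, rfl⟩ := h2 a
    exact_mod_cast Submodule.smul_mem_smul (Ideal.mem_span_singleton_self (2 : ℤ))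
      (Submodule.mem_top (x := b))
  obtain ⟨r, hr1, hr⟩ := Submodule.exists_sub_one_mem_and_smul_eq_zero_of_fg_of_le_smul _ ⊤
    (Module.Finite.iff_addGroup_fg.mpr hfg).fg_top hle
  obtain ⟨k, hk⟩ := Ideal.mem_span_singleton'.mp hr1
  exact ⟨r, ⟨k, by linarith⟩, fun a => hr a Submodule.mem_top⟩

lemma AddGroup.FG.finite_odd_card_of_odd_zsmul_eq_zero {A : Type*} [AddCommGroup A]
    (hfg : AddGroup.FG A) {r : ℤ} (hr : Odd r) (hrA : ∀ a : A, r • a = 0) :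
    Finite A ∧ Odd (Nat.card A) := by
  have hr0 : r ≠ 0 := by rintro rfl; simp at hr
  have : Finite A := AddCommGroup.finite_of_fg_isAddTorsion A fun a =>
    isOfFinAddOrder_iff_zsmul_eq_zero.mpr ⟨r, hr0, hrA a⟩
  refine ⟨this, Nat.not_even_iff_odd.mp fun heven => ?_⟩
  have : Fact (Nat.Prime 2) := ⟨Nat.prime_two⟩
  obtain ⟨x, hx⟩ := exists_prime_addOrderOf_dvd_card' 2 heven.two_dvd
  have h2r : ((2 : ℕ) : ℤ) ∣ r := hx ▸ addOrderOf_dvd_iff_zsmul_eq_zero.mpr (hrA x)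
  exact Int.not_even_iff_odd.mpr hr (even_iff_two_dvd.mpr (by exact_mod_cast h2r))

theorem stmt_6_general (A : Type*) [AddCommGroup A] (hfg : AddGroup.FG A)
    (σ : A ≃+ A) (hσ : ∀ a, σ (σ a) = a)
    (hodd : Odd (Nat.card (A ⧸ AddSubgroup.closure (Set.range fun a => a - σ a)))) :
    Finite A ∧ Odd (Nat.card A) := by
  set φ : A →+ A := AddMonoidHom.id A - σ.toAddMonoidHom
  have hrange : AddSubgroup.closure (Set.range fun a => a - σ a) = φ.range := by
    change AddSubgroup.closure (Set.range φ) = _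
    rw [← AddMonoidHom.coe_range, AddSubgroup.closure_eq]
  have hφφ (a : A) : φ (φ a) = 2 • φ a := by
    change a - σ a - σ (a - σ a) = 2 • (a - σ a)
    rw [map_sub, hσ]
    abel
  rw [hrange] at hodd
  obtain ⟨r, hr, hrA⟩ := hfg.exists_odd_zsmul_eq_zero_of_two_nsmul_surjective
    (φ.two_nsmul_surjective_of_quotient_range hφφ (two_nsmul_surjective_of_odd_card hodd))
  exact hfg.finite_odd_card_of_odd_zsmul_eq_zero hr hrA

/-- Let `A` be a finitely generated abelian group with an action of `ℤ/2`,
given by an involutive automorphism `σ`. If the coinvariants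
`A ⧸ ⟨a - σ a : a ∈ A⟩` form a finite group of odd order, then `A` is finite of odd order. -/
theorem stmt_6 (A : Type*) [AddCommGroup A] (hfg : AddGroup.FG A)
    (σ : A ≃+ A) (hσ : ∀ a, σ (σ a) = a)
    (hfin : Finite (A ⧸ AddSubgroup.closure (Set.range fun a => a - σ a)))
    (hodd : Odd (Nat.card (A ⧸ AddSubgroup.closure (Set.range fun a => a - σ a)))) :
    Finite A ∧ Odd (Nat.card A) :=
  stmt_6_general A hfg σ hσ hodd
end

section
/- Let Q be a finite group with a central cyclic subgroup H, and set G = Q/H. Then every elementary abelian p-subgroup of G has rank at most 2, provided Q contains no subgroup isomorphic to (ℤ/p) × (ℤ/p). -/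
/-!
Suppose `E ≅ (ℤ/p)^r` with `r ≥ 3` and let `P` be its preimage in `Q`, a central extension of `E`
by the cyclic group `H`. For `q ∈ P`, the commutator map `x ↦ ⁅q, x⁆` is a homomorphism from `P`
into the `p`-torsion of `H`, which has at most `p` elements, so the centralizer of `q` has index at
most `p` in `P`. As `|E| ≥ p³`, its image in `E` is not contained in the cyclic group generated by
the image of `q`; this yields `y` commuting with `q` whose images generate an elementary abelian
group of order `p²`. The finite abelian group `A = ⟨q, y⟩` then satisfies
`|A[p]| = |A / A^p| ≥ p²`, and the `ℤ/p`-vector space `A[p]` contains a copy of `(ℤ/p)²`.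
-/

open Subgroup
open scoped commutatorElement IsMulCommutative

theorem exists_injective_zmod_prod_of_forall_pow_eq_one {p : ℕ} (hp : p.Prime)
    {W : Type*} [CommGroup W] [Finite W] (hW : ∀ w : W, w ^ p = 1) (hcard : p < Nat.card W) :
    ∃ f : Multiplicative (ZMod p × ZMod p) →* W, Function.Injective f := by
  have := Fact.mk hp
  have hW' : ∀ w : Additive W, p • w = 0 := fun w => hW w.toMul
  let := AddCommGroup.zmodModule hW'
  have hrank : 1 < Module.finrank (ZMod p) (Additive W) := by
    have h := @Module.natCard_eq_pow_finrank (ZMod p) (Additive W) _ _ _ Module.Finite.of_finite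
    rw [Nat.card_zmod] at h
    rw [← Nat.pow_lt_pow_iff_right hp.one_lt, pow_one, ← h]
    exact hcard
  obtain ⟨v, hv⟩ := exists_linearIndependent_of_le_finrank hrank
  let e := LinearEquiv.finTwoArrow (ZMod p) (ZMod p)
  let f := Fintype.linearCombination (ZMod p) v ∘ₗ e.symm.toLinearMap
  exact ⟨MonoidHom.toAdditive.symm f.toAddMonoidHom,
    hv.fintypeLinearCombination_injective.comp e.symm.injective⟩

theorem MonoidHom.card_ker_mul_card_range {G H : Type*} [Group G] [Group H] (f : G →* H) :
    Nat.card f.ker * Nat.card f.range = Nat.card G := by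
  rw [← index_ker, card_mul_index]

theorem card_range_le_card_ker_powMonoidHom {p : ℕ} {A B : Type*} [CommGroup A] [Finite A]
    [Group B] (ρ : A →* B) (hρ : ∀ a, ρ a ^ p = 1) :
    Nat.card ρ.range ≤ Nat.card (powMonoidHom p : A →* A).ker := by
  have hle : (powMonoidHom p : A →* A).range ≤ ρ.ker := by
    rintro _ ⟨a, rfl⟩
    simp [hρ]
  refine Nat.le_of_mul_le_mul_left ?_ (Nat.card_pos (α := ρ.ker))
  calc Nat.card ρ.ker * Nat.card ρ.range
      = Nat.card (powMonoidHom p : A →* A).ker * Nat.card (powMonoidHom p : A →* A).range := by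
        rw [MonoidHom.card_ker_mul_card_range, MonoidHom.card_ker_mul_card_range]
    _ ≤ Nat.card (powMonoidHom p : A →* A).ker * Nat.card ρ.ker :=
        Nat.mul_le_mul_left _ (card_le_of_le hle)
    _ = Nat.card ρ.ker * Nat.card (powMonoidHom p : A →* A).ker := mul_comm _ _

theorem exists_injective_zmod_prod_of_card_range {p : ℕ} (hp : p.Prime) {A B : Type*}
    [CommGroup A] [Finite A] [Group B] (ρ : A →* B) (hρ : ∀ a, ρ a ^ p = 1)
    (hcard : p < Nat.card ρ.range) :
    ∃ f : Multiplicative (ZMod p × ZMod p) →* A, Function.Injective f := by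
  obtain ⟨f, hf⟩ := exists_injective_zmod_prod_of_forall_pow_eq_one hp
    (W := (powMonoidHom p : A →* A).ker) (fun w => Subtype.ext w.2)
    (hcard.trans_le (card_range_le_card_ker_powMonoidHom ρ hρ))
  exact ⟨(powMonoidHom p).ker.subtype.comp f, Subtype.val_injective.comp hf⟩

section CentralExtension

variable {P E : Type*} [Group P] [CommGroup E]

theorem commutatorElement_mem_ker (Φ : P →* E) (q x : P) : ⁅q, x⁆ ∈ Φ.ker := by
  rw [MonoidHom.mem_ker, map_commutatorElement, commutatorElement_eq_one_iff_mul_comm, mul_comm]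

variable {Φ : P →* E}

def commutatorHom (hcent : Φ.ker ≤ center P) (q : P) : P →* Φ.ker where
  toFun x := ⟨⁅q, x⁆, commutatorElement_mem_ker Φ q x⟩
  map_one' := Subtype.ext (commutatorElement_one_right q)
  map_mul' x y := Subtype.ext <| by
    have hcomm := mem_center_iff.1 (hcent (commutatorElement_mem_ker Φ q y)) x
    simp only [commutatorElement_mul_right_eq_mul_conj, MulMemClass.mk_mul_mk]
    rw [mul_assoc _ x, hcomm, ← mul_assoc, mul_inv_cancel_right]

theorem ker_commutatorHom (hcent : Φ.ker ≤ center P) (q : P) :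
    (commutatorHom hcent q).ker = centralizer {q} := by
  ext x
  rw [MonoidHom.mem_ker, mem_centralizer_singleton_iff, eq_comm (a := x * q),
    ← commutatorElement_eq_one_iff_mul_comm]
  exact Subtype.ext_iff

theorem index_centralizer_le {p : ℕ} (hp : 0 < p) (hcent : Φ.ker ≤ center P) [IsCyclic Φ.ker]
    (hexp : ∀ g : E, g ^ p = 1) (q : P) : (centralizer {q}).index ≤ p := by
  set χ := commutatorHom hcent q
  have hχ : ∀ z : χ.range, z ^ p = 1 := by
    rintro ⟨_, x, rfl⟩
    have hxp : x ^ p ∈ Φ.ker := by rw [MonoidHom.mem_ker, map_pow, hexp]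
    refine Subtype.ext ?_
    rw [SubmonoidClass.coe_pow, ← map_pow, OneMemClass.coe_one, ← MonoidHom.mem_ker,
      ker_commutatorHom, mem_centralizer_singleton_iff]
    exact (mem_center_iff.1 (hcent hxp) q).symm
  rw [← ker_commutatorHom hcent q, index_ker, ← IsCyclic.exponent_eq_card]
  exact Nat.le_of_dvd hp (Monoid.exponent_dvd_of_forall_pow_eq_one hχ)

theorem exists_commute_notMem_zpowers [Finite P] {p : ℕ} (hp : p.Prime)
    (hΦ : Function.Surjective Φ) (hcent : Φ.ker ≤ center P) [IsCyclic Φ.ker]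
    (hexp : ∀ g : E, g ^ p = 1) (hcard : p ^ 3 ≤ Nat.card E) (q : P) :
    ∃ y, Commute q y ∧ Φ y ∉ zpowers (Φ q) := by
  have := Finite.of_surjective Φ hΦ
  by_contra! h
  have hle : (centralizer {q}).map Φ ≤ zpowers (Φ q) := by
    rintro _ ⟨y, hy, rfl⟩
    exact h y (mem_centralizer_singleton_iff.1 hy).symm
  have hindex : (zpowers (Φ q)).index ≤ p :=
    calc (zpowers (Φ q)).index ≤ ((centralizer {q}).map Φ).index := index_antitone hle
      _ = (centralizer {q}).index := index_map_eq _ hΦ (hcent.trans (center_le_centralizer _))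
      _ ≤ p := index_centralizer_le hp.pos hcent hexp q
  have hcard_zpowers : Nat.card (zpowers (Φ q)) ≤ p := by
    rw [Nat.card_zpowers]
    exact orderOf_le_of_pow_eq_one hp.pos (hexp _)
  have : p ^ 3 ≤ p ^ 2 := calc
    p ^ 3 ≤ Nat.card E := hcard
    _ = Nat.card (zpowers (Φ q)) * (zpowers (Φ q)).index := (card_mul_index _).symm
    _ ≤ p ^ 2 := by rw [sq]; exact Nat.mul_le_mul hcard_zpowers hindex
  exact absurd this (Nat.pow_lt_pow_right hp.one_lt (by norm_num)).not_ge

theorem exists_injective_zmod_prod_of_central_extension [Finite P] {p : ℕ} (hp : p.Prime)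
    (hΦ : Function.Surjective Φ) (hcent : Φ.ker ≤ center P) [IsCyclic Φ.ker]
    (hexp : ∀ g : E, g ^ p = 1) (hcard : p ^ 3 ≤ Nat.card E) :
    ∃ f : Multiplicative (ZMod p × ZMod p) →* P, Function.Injective f := by
  have := Fact.mk hp
  have := Finite.of_surjective Φ hΦ
  have : Nontrivial E := Finite.one_lt_card_iff_nontrivial.1 <|
    (Nat.one_lt_pow three_ne_zero hp.one_lt).trans_le hcard
  obtain ⟨g, hg⟩ := exists_ne (1 : E)
  obtain ⟨q, rfl⟩ := hΦ g
  obtain ⟨y, hqy, hy⟩ := exists_commute_notMem_zpowers hp hΦ hcent hexp hcard q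
  let A := closure ({q, y} : Set P)
  have hqA : q ∈ A := subset_closure (Set.mem_insert q {y})
  have hyA : y ∈ A := subset_closure (Set.mem_insert_of_mem q rfl)
  have : IsMulCommutative A := isMulCommutative_closure <| by
    rintro a (rfl | rfl) b (rfl | rfl)
    exacts [rfl, hqy.eq, hqy.eq.symm, rfl]
  let ρ := Φ.comp A.subtype
  have hlt : zpowers (Φ q) < ρ.range :=
    SetLike.lt_iff_le_and_exists.2 ⟨zpowers_le.2 ⟨⟨q, hqA⟩, rfl⟩, Φ y, ⟨⟨y, hyA⟩, rfl⟩, hy⟩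
  have hrange : p < Nat.card ρ.range := by
    calc p = Nat.card (zpowers (Φ q)) := by rw [Nat.card_zpowers, orderOf_eq_prime (hexp _) hg]
      _ < Nat.card ρ.range :=
        Set.Finite.card_lt_card (Set.toFinite _) (SetLike.coe_ssubset_coe.2 hlt)
  obtain ⟨f, hf⟩ := exists_injective_zmod_prod_of_card_range hp ρ (fun a => hexp _) hrange
  exact ⟨A.subtype.comp f, A.subtype_injective.comp hf⟩

end CentralExtension

section Preimage

variable {Q G : Type*} [Group Q] [Group G] {φ : Q →* G} {E : Subgroup G}

theorem MonoidHom.mem_ker_subgroupComap {x : E.comap φ} :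
    x ∈ (φ.subgroupComap E).ker ↔ (x : Q) ∈ φ.ker := by
  rw [MonoidHom.mem_ker, MonoidHom.mem_ker, Subtype.ext_iff]
  rfl

theorem MonoidHom.ker_subgroupComap_le_center (hcent : φ.ker ≤ center Q) :
    (φ.subgroupComap E).ker ≤ center (E.comap φ) := fun _ hx =>
  mem_center_iff.2 fun z => Subtype.ext (mem_center_iff.1 (hcent (mem_ker_subgroupComap.1 hx)) z)

theorem MonoidHom.isCyclic_ker_subgroupComap [IsCyclic φ.ker] :
    IsCyclic (φ.subgroupComap E).ker :=
  isCyclic_of_injective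
    (((E.comap φ).subtype.comp (φ.subgroupComap E).ker.subtype).codRestrict φ.ker
      fun x => mem_ker_subgroupComap.1 x.2)
    fun _ _ hab => Subtype.val_injective <| Subtype.val_injective (congrArg Subtype.val hab :)

end Preimage

/-- Let `Q` be a finite group with a central cyclic subgroup `H = ker φ` and
`G = Q/H` (presented via a surjection `φ : Q →* G` with central cyclic kernel). If `Q` has
no subgroup isomorphic to `(ℤ/p) × (ℤ/p)`, then every elementary abelian `p`-subgroup of
`G` has rank at most 2. -/
theorem stmt_15 (p : ℕ) (hp : p.Prime) (Q G : Type*) [Group Q] [Finite Q] [Group G]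
    (φ : Q →* G) (hφ : Function.Surjective φ)
    (hcent : φ.ker ≤ Subgroup.center Q) (hcyc : IsCyclic φ.ker)
    (hQ : ¬∃ K : Subgroup Q, Nonempty (K ≃* Multiplicative (ZMod p × ZMod p))) :
    ∀ (E : Subgroup G) (r : ℕ),
      Nonempty (E ≃* Multiplicative (Fin r → ZMod p)) → r ≤ 2 := by
  rintro E r ⟨e⟩
  by_contra! hr
  let Φ := (e : E →* Multiplicative (Fin r → ZMod p)).comp (φ.subgroupComap E)
  have hker : Φ.ker = (φ.subgroupComap E).ker := MonoidHom.ker_mulEquiv_comp _ _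
  have : IsCyclic Φ.ker := hker ▸ MonoidHom.isCyclic_ker_subgroupComap
  have hexp : ∀ g : Multiplicative (Fin r → ZMod p), g ^ p = 1 := fun g => by
    rw [← ofAdd_toAdd g, ← ofAdd_nsmul, ofAdd_eq_one]
    ext i
    simp
  have hcard : p ^ 3 ≤ Nat.card (Multiplicative (Fin r → ZMod p)) := by
    rw [show Nat.card (Multiplicative (Fin r → ZMod p)) = Nat.card (Fin r → ZMod p) from rfl,
      Nat.card_fun, Nat.card_zmod, Nat.card_fin]
    exact Nat.pow_le_pow_right hp.pos hr
  obtain ⟨f, hf⟩ := exists_injective_zmod_prod_of_central_extension hp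
    (e.surjective.comp (φ.subgroupComap_surjective_of_surjective E hφ))
    (hker ▸ MonoidHom.ker_subgroupComap_le_center hcent) hexp hcard
  exact hQ ⟨((E.comap φ).subtype.comp f).range,
    ⟨(MonoidHom.ofInjective (Subtype.val_injective.comp hf)).symm⟩⟩
end
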